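/- arXiv:1505.01566 — 2 statements merged into one kernel-verified Lean document; each statement's English description precedes it below -/
import Mathlib

section
/- Let A = (a_{ij})_{1 ≤ i,j ≤ ℓ} be a real ℓ×ℓ matrix and suppose there exists c₀ ∈ [0,1) such that ‖A‖ := max_{j=1,…,ℓ} Σ_{i=1}^{ℓ} |a_{ij}| ≤ c₀. Then (1 − c₀)^ℓ ≤ det(I − A) ≤ (1 + c₀)^ℓ, where I is the ℓ×ℓ identity matrix. -/
/-!
Eliminating the first column of `1 - A` by row operations gives
`det (1 - A) = (1 - a₀₀) * det (1 - A')`, where `1 - A'` is the Schur complement of the pivot and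
`A' i j = a_{i+1,j+1} + a_{i+1,0} a_{0,j+1} / (1 - a₀₀)`. The matrix `A'` again has column sums at
most `c₀`, because `Σ_{i>0} |a_{i0}| ≤ c₀ - |a₀₀| ≤ 1 - a₀₀`; and `1 - c₀ ≤ 1 - a₀₀ ≤ 1 + c₀`.
Induction on `ℓ` finishes the proof.
-/

open Matrix

variable {K : Type*} {n : ℕ}

def schurComplementAtZero [Field K] (M : Matrix (Fin (n + 1)) (Fin (n + 1)) K) :
    Matrix (Fin n) (Fin n) K :=
  of fun i j => M i.succ j.succ - M i.succ 0 * M 0 j.succ / M 0 0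

section Field

variable [Field K]

theorem det_eq_mul_det_schurComplementAtZero (M : Matrix (Fin (n + 1)) (Fin (n + 1)) K)
    (h : M 0 0 ≠ 0) : M.det = M 0 0 * (schurComplementAtZero M).det := by
  let c : Fin (n + 1) → K := Fin.cases 0 fun i => -(M i.succ 0 / M 0 0)
  let C : Matrix (Fin (n + 1)) (Fin (n + 1)) K := of fun i j => M i j + c i * M 0 j
  have hC : C.det = M.det := det_eq_of_forall_row_eq_smul_add_const c 0 rfl fun _ _ => rfl
  have hC_col : ∀ i : Fin n, C i.succ 0 = 0 := fun i => by
    simp [C, c]; field_simp; ring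
  have hC_sub : C.submatrix Fin.succ Fin.succ = schurComplementAtZero M := by
    ext i j; simp [C, c, schurComplementAtZero]; ring
  rw [← hC, det_succ_column_zero, Fin.sum_univ_succ]
  simp [hC_col, hC_sub, C, c]

theorem one_sub_schurComplementAtZero_one_sub_apply (A : Matrix (Fin (n + 1)) (Fin (n + 1)) K)
    (i j : Fin n) :
    (1 - schurComplementAtZero (1 - A) : Matrix (Fin n) (Fin n) K) i j =
      A i.succ j.succ + A i.succ 0 * A 0 j.succ / (1 - A 0 0) := by
  by_cases hij : i = j <;>
    simp [schurComplementAtZero, one_apply, hij, (Fin.succ_ne_zero j).symm] <;> ring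

end Field

section OrderedField

variable [Field K] [LinearOrder K] [IsStrictOrderedRing K]

theorem abs_apply_le_of_forall_sum_abs_le {m : Type*} [Fintype m] {A : Matrix m m K} {c : K}
    (hA : ∀ j, ∑ i, |A i j| ≤ c) (i j : m) : |A i j| ≤ c :=
  (Finset.single_le_sum (fun k _ => abs_nonneg (A k j)) (Finset.mem_univ i)).trans (hA j)

theorem sum_abs_one_sub_schurComplementAtZero_one_sub_le
    {A : Matrix (Fin (n + 1)) (Fin (n + 1)) K} {c : K} (hc : c < 1)
    (hA : ∀ j, ∑ i, |A i j| ≤ c) (j : Fin n) :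
    ∑ i, |(1 - schurComplementAtZero (1 - A) : Matrix (Fin n) (Fin n) K) i j| ≤ c := by
  have hcol : ∀ j, |A 0 j| + ∑ i : Fin n, |A i.succ j| ≤ c := fun j => by
    simpa [Fin.sum_univ_succ] using hA j
  have hpivot : 0 < 1 - A 0 0 := by
    linarith [le_abs_self (A 0 0), abs_apply_le_of_forall_sum_abs_le hA 0 0]
  have hratio : (c - |A 0 0|) / (1 - A 0 0) ≤ 1 := by
    rw [div_le_one hpivot]; linarith [le_abs_self (A 0 0)]
  calc ∑ i, |(1 - schurComplementAtZero (1 - A) : Matrix (Fin n) (Fin n) K) i j|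
      ≤ ∑ i : Fin n, (|A i.succ j.succ| + |A 0 j.succ| * |A i.succ 0| / (1 - A 0 0)) := by
        refine Finset.sum_le_sum fun i _ => ?_
        rw [one_sub_schurComplementAtZero_one_sub_apply]
        refine (abs_add_le _ _).trans_eq ?_
        rw [abs_div, abs_mul, abs_of_pos hpivot, mul_comm |A i.succ 0|]
    _ = ∑ i : Fin n, |A i.succ j.succ| +
          |A 0 j.succ| * ((∑ i : Fin n, |A i.succ 0|) / (1 - A 0 0)) := by
        rw [Finset.sum_add_distrib, ← Finset.sum_div, ← Finset.mul_sum, mul_div_assoc]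
    _ ≤ (c - |A 0 j.succ|) + |A 0 j.succ| * ((c - |A 0 0|) / (1 - A 0 0)) := by
        gcongr
        · linarith [hcol j.succ]
        · linarith [hcol 0]
    _ ≤ (c - |A 0 j.succ|) + |A 0 j.succ| * 1 := by gcongr
    _ = c := by ring

end OrderedField

theorem det_one_sub_bounds_general (ℓ : ℕ) (A : Matrix (Fin ℓ) (Fin ℓ) ℝ)
    (c₀ : ℝ) (hc₀1 : c₀ < 1)
    (hA : ∀ j : Fin ℓ, ∑ i : Fin ℓ, |A i j| ≤ c₀) :
    (1 - c₀) ^ ℓ ≤ (1 - A).det ∧ (1 - A).det ≤ (1 + c₀) ^ ℓ := by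
  induction ℓ with
  | zero => simp
  | succ n ih =>
    obtain ⟨hpivot_ge, hpivot_le⟩ : 1 - c₀ ≤ 1 - A 0 0 ∧ 1 - A 0 0 ≤ 1 + c₀ := by
      constructor <;> linarith [abs_le.mp (abs_apply_le_of_forall_sum_abs_le hA 0 0)]
    obtain ⟨hlower, hupper⟩ :=
      ih _ (sum_abs_one_sub_schurComplementAtZero_one_sub_le hc₀1 hA)
    rw [sub_sub_cancel] at hlower hupper
    have hpivot : (1 - A) 0 0 = 1 - A 0 0 := by simp
    rw [det_eq_mul_det_schurComplementAtZero _ (by linarith), hpivot, pow_succ', pow_succ']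
    have hc₀ : 0 ≤ 1 - c₀ := by linarith
    exact ⟨mul_le_mul hpivot_ge hlower (pow_nonneg hc₀ n) (by linarith),
      mul_le_mul hpivot_le hupper ((pow_nonneg hc₀ n).trans hlower) (by linarith)⟩

/-- **Proposition 3.9** (Kumano-go). If a real `ℓ×ℓ` matrix `A` satisfies
`‖A‖ := max_j Σ_i |a_{ij}| ≤ c₀` for some `c₀ ∈ [0,1)`, then
`(1 - c₀)^ℓ ≤ det(I - A) ≤ (1 + c₀)^ℓ`. -/
theorem det_one_sub_bounds (ℓ : ℕ) (hℓ : 1 ≤ ℓ) (A : Matrix (Fin ℓ) (Fin ℓ) ℝ)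
    (c₀ : ℝ) (hc₀0 : 0 ≤ c₀) (hc₀1 : c₀ < 1)
    (hA : ∀ j : Fin ℓ, ∑ i : Fin ℓ, |A i j| ≤ c₀) :
    (1 - c₀) ^ ℓ ≤ (1 - A).det ∧ (1 - A).det ≤ (1 + c₀) ^ ℓ :=
  det_one_sub_bounds_general ℓ A c₀ hc₀1 hA
end

section
/- Let the cut-offs χ_a and χ be as defined. (i) For all multi-indices γ₁, γ₂ there is C > 0 (depending on a, ψ, γ₁, γ₂ but not on the point) such that |∂_{w'}^{γ₁+γ₂} χ_a(w,w')| ≤ C ⟨w⟩^{−|γ₁|} ⟨w'⟩^{−|γ₂|} for all w, w' ∈ ℝ^n. (ii) For all multi-indices α₁, α₂, β₁, β₂ there is C > 0 such that |∂_{x'}^{α₁+α₂} ∂_{ξ'}^{β₁+β₂} χ(x,x',ξ',ξ)| ≤ C ⟨x⟩^{−|α₁|} ⟨x'⟩^{−|α₂|} ⟨ξ⟩^{−|β₁|} ⟨ξ'⟩^{−|β₂|} for all x, x', ξ, ξ' ∈ ℝ^n. -/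
open scoped BigOperators
open Set MeasureTheory

noncomputable section

/-- `ℝ^n` modelled as functions `Fin n → ℝ`. -/
abbrev V (n : ℕ) := Fin n → ℝ

/-- The Japanese bracket `⟨x⟩ = (1 + |x|²)^{1/2}` (Euclidean norm). -/
noncomputable def jb {n : ℕ} (x : V n) : ℝ := Real.sqrt (1 + ∑ i, (x i) ^ 2)

/-- Euclidean norm on `V n`. -/
noncomputable def enorm2 {n : ℕ} (x : V n) : ℝ := Real.sqrt (∑ i, (x i) ^ 2)

/-- Euclidean inner product `x · ξ`. -/
noncomputable def dotV {n : ℕ} (x ξ : V n) : ℝ := ∑ i, x i * ξ i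

/-- Partial derivative in the `i`-th coordinate of the first (the `x`) variable. -/
noncomputable def pdX {n : ℕ} {E : Type*} [NormedAddCommGroup E] [NormedSpace ℝ E]
    (i : Fin n) (f : V n → V n → E) : V n → V n → E :=
  fun x ξ => fderiv ℝ (fun y => f y ξ) x (Pi.single i 1)

/-- Partial derivative in the `i`-th coordinate of the second (the `ξ`) variable. -/
noncomputable def pdXi {n : ℕ} {E : Type*} [NormedAddCommGroup E] [NormedSpace ℝ E]
    (i : Fin n) (f : V n → V n → E) : V n → V n → E :=
  fun x ξ => fderiv ℝ (fun η => f x η) ξ (Pi.single i 1)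

/-- Multi-index derivative `∂_x^β ∂_ξ^α f`: a multi-index is recorded as a list of
coordinate directions (its length is the order `|β|`, resp. `|α|`). -/
noncomputable def mderiv {n : ℕ} {E : Type*} [NormedAddCommGroup E] [NormedSpace ℝ E]
    (β α : List (Fin n)) (f : V n → V n → E) : V n → V n → E :=
  List.foldr (fun i g => pdX i g) (List.foldr (fun i g => pdXi i g) f α) β

/-- Gradient in the first variable. -/
noncomputable def gradX {n : ℕ} (f : V n → V n → ℝ) (x ξ : V n) : V n :=
  fun i => pdX i f x ξ

/-- Gradient in the second variable. -/
noncomputable def gradXi {n : ℕ} (f : V n → V n → ℝ) (x ξ : V n) : V n :=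
  fun i => pdXi i f x ξ

/-- `J = φ - x·ξ`. -/
noncomputable def Jfun {n : ℕ} (φ : V n → V n → ℝ) : V n → V n → ℝ :=
  fun x ξ => φ x ξ - dotV x ξ

/-- The SG symbol class `S^{m,μ}(ℝ^{2n})`. -/
def IsSGSymbol {n : ℕ} (m μ : ℝ) (f : V n → V n → ℝ) : Prop :=
  ContDiff ℝ (⊤ : ℕ∞) (fun p : V n × V n => f p.1 p.2) ∧
  ∀ β α : List (Fin n), ∃ C > 0, ∀ x ξ : V n,
    |mderiv β α f x ξ| ≤ C * jb x ^ (m - (β.length : ℝ)) * jb ξ ^ (μ - (α.length : ℝ))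

/-- SG phase functions: `φ ∈ S^{1,1}`, `⟨∇_x φ⟩ ≍ ⟨ξ⟩`, `⟨∇_ξ φ⟩ ≍ ⟨x⟩`. -/
def IsPhaseFunction {n : ℕ} (φ : V n → V n → ℝ) : Prop :=
  IsSGSymbol 1 1 φ ∧
  (∃ c₁ > 0, ∃ c₂ > 0, ∀ x ξ : V n,
    c₁ * jb ξ ≤ jb (gradX φ x ξ) ∧ jb (gradX φ x ξ) ≤ c₂ * jb ξ) ∧
  (∃ c₁ > 0, ∃ c₂ > 0, ∀ x ξ : V n,
    c₁ * jb x ≤ jb (gradXi φ x ξ) ∧ jb (gradXi φ x ξ) ≤ c₂ * jb x)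

/-- The mixed Hessian `φ''_{xξ}`. -/
noncomputable def mixedHess {n : ℕ} (φ : V n → V n → ℝ) (x ξ : V n) :
    Matrix (Fin n) (Fin n) ℝ :=
  Matrix.of fun i j => pdX i (pdXi j φ) x ξ

/-- Regular SG phase functions of class `P_r(τ)`:
`|det φ''_{xξ}| ≥ r` and `|∂_x^β ∂_ξ^α J| ≤ τ ⟨x⟩^{1-|β|} ⟨ξ⟩^{1-|α|}` for `|α+β| ≤ 2`. -/
def IsRegularPhase {n : ℕ} (r τ : ℝ) (φ : V n → V n → ℝ) : Prop :=
  IsPhaseFunction φ ∧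
  (∀ x ξ : V n, r ≤ |(mixedHess φ x ξ).det|) ∧
  ∀ β α : List (Fin n), β.length + α.length ≤ 2 → ∀ x ξ : V n,
    |mderiv β α (Jfun φ) x ξ| ≤ τ * jb x ^ (1 - (β.length : ℝ)) * jb ξ ^ (1 - (α.length : ℝ))

/-- The cut-off `χ_a(w,w') = ψ(a(w-w')⟨w⟩^{-1})`. -/
noncomputable def chiA {n : ℕ} (ψ : V n → ℝ) (a : ℝ) (w w' : V n) : ℝ :=
  ψ ((a * (jb w)⁻¹) • (w - w'))

namespace Aux
variable {n : ℕ}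

noncomputable def iterD (γ : List (Fin n)) (f : V n → ℝ) : V n → ℝ :=
  γ.foldr (fun i g => fun z => fderiv ℝ g z (Pi.single i 1)) f

@[simp] lemma iterD_nil (f : V n → ℝ) : iterD ([] : List (Fin n)) f = f := rfl
@[simp] lemma iterD_cons (i : Fin n) (γ : List (Fin n)) (f : V n → ℝ) :
    iterD (i :: γ) f = fun z => fderiv ℝ (iterD γ f) z (Pi.single i 1) := rfl

lemma iterD_contDiff {f : V n → ℝ} (hf : ContDiff ℝ (⊤ : ℕ∞) f) (γ : List (Fin n)) :
    ContDiff ℝ (⊤ : ℕ∞) (iterD γ f) := by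
  induction γ with
  | nil => exact hf
  | cons i γ ih => exact (ih.fderiv_right (by simp)).clm_apply contDiff_const

lemma sum_sq_nonneg (x : V n) : 0 ≤ ∑ i, (x i) ^ 2 :=
  Finset.sum_nonneg fun i _ => sq_nonneg _

lemma enorm2_nonneg (x : V n) : 0 ≤ enorm2 x := Real.sqrt_nonneg _

lemma jb_sq (x : V n) : jb x ^ 2 = 1 + ∑ i, (x i) ^ 2 :=
  Real.sq_sqrt (by linarith [sum_sq_nonneg x])

lemma one_le_jb (x : V n) : 1 ≤ jb x := by
  have h0 : 0 ≤ jb x := Real.sqrt_nonneg _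
  nlinarith [jb_sq x, sum_sq_nonneg x, h0]

lemma jb_pos (x : V n) : 0 < jb x := lt_of_lt_of_le one_pos (one_le_jb x)

lemma enorm2_sq (x : V n) : enorm2 x ^ 2 = ∑ i, (x i) ^ 2 :=
  Real.sq_sqrt (sum_sq_nonneg x)

lemma enorm2_smul (c : ℝ) (hc : 0 ≤ c) (x : V n) : enorm2 (c • x) = c * enorm2 x := by
  have : ∑ i, ((c • x) i) ^ 2 = c ^ 2 * ∑ i, (x i) ^ 2 := by
    rw [Finset.mul_sum]; exact Finset.sum_congr rfl fun i _ => by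
      simp [Pi.smul_apply, smul_eq_mul]; ring
  rw [enorm2, this, Real.sqrt_mul (sq_nonneg c), Real.sqrt_sq hc, enorm2]

lemma enorm2_add_le (x y : V n) : enorm2 (x + y) ≤ enorm2 x + enorm2 y := by
  have hxy : ∑ i, (x i * y i) ≤ enorm2 x * enorm2 y := by
    have h1 := Finset.sum_mul_sq_le_sq_mul_sq Finset.univ x y
    have h2 : ∑ i, (x i * y i) ≤ |∑ i, (x i * y i)| := le_abs_self _
    have h3 : |∑ i, (x i * y i)| = Real.sqrt ((∑ i, (x i * y i)) ^ 2) := (Real.sqrt_sq_eq_abs _).symm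
    rw [h3] at h2
    refine h2.trans ?_
    rw [show enorm2 x * enorm2 y = Real.sqrt ((∑ i, (x i)^2) * (∑ i, (y i)^2)) by
      rw [Real.sqrt_mul (sum_sq_nonneg x)]; rfl]
    exact Real.sqrt_le_sqrt h1
  have hsum : ∑ i, ((x + y) i) ^ 2 ≤ (enorm2 x + enorm2 y) ^ 2 := by
    have : ∑ i, ((x + y) i) ^ 2 = (∑ i, (x i)^2) + 2 * (∑ i, (x i * y i)) + ∑ i, (y i)^2 := by
      rw [Finset.mul_sum, ← Finset.sum_add_distrib, ← Finset.sum_add_distrib]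
      exact Finset.sum_congr rfl fun i _ => by simp [Pi.add_apply]; ring
    rw [this]
    have ex := enorm2_sq x; have ey := enorm2_sq y
    nlinarith [enorm2_nonneg x, enorm2_nonneg y]
  calc enorm2 (x + y) ≤ Real.sqrt ((enorm2 x + enorm2 y) ^ 2) := Real.sqrt_le_sqrt hsum
    _ = enorm2 x + enorm2 y := Real.sqrt_sq (by linarith [enorm2_nonneg x, enorm2_nonneg y])

lemma jb_le_peetre (w w' : V n) : jb w' ≤ jb w + enorm2 (w - w') := by
  have hneg : enorm2 (w - w') = enorm2 (w' - w) := by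
    unfold enorm2; congr 1
    exact Finset.sum_congr rfl fun i _ => by simp [Pi.sub_apply]; ring
  have h1 : enorm2 w' ≤ enorm2 w + enorm2 (w - w') := by
    have h := enorm2_add_le (n := n) w (w' - w)
    rw [show w + (w' - w) = w' by abel] at h
    rw [hneg]; exact h
  have hs : enorm2 w ≤ jb w := by
    rw [enorm2, jb]; exact Real.sqrt_le_sqrt (by linarith)
  have ht := enorm2_nonneg (w - w')
  have hsq : 1 + ∑ i, (w' i) ^ 2 ≤ (jb w + enorm2 (w - w')) ^ 2 := by
    have e1 : (w' : V n) = w' := rfl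
    have h2 : (enorm2 w') ^ 2 ≤ (enorm2 w + enorm2 (w - w')) ^ 2 := by
      nlinarith [enorm2_nonneg w', enorm2_nonneg w]
    rw [enorm2_sq] at h2
    nlinarith [jb_sq w, enorm2_sq w, jb_pos w]
  calc jb w' = Real.sqrt (1 + ∑ i, (w' i) ^ 2) := rfl
    _ ≤ Real.sqrt ((jb w + enorm2 (w - w')) ^ 2) := Real.sqrt_le_sqrt hsq
    _ = jb w + enorm2 (w - w') := Real.sqrt_sq (by linarith [jb_pos w])

lemma continuous_enorm2 : Continuous (enorm2 : V n → ℝ) := by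
  unfold enorm2; fun_prop

section Psi
variable {ψ : V n → ℝ}

/-- All iterated derivatives of ψ vanish where `enorm2 > 2/3`. -/
lemma iterD_psi_zero (hψ_supp : ∀ w : V n, ψ w ≠ 0 → enorm2 w ≤ 2 / 3)
    (γ : List (Fin n)) : ∀ z : V n, 2 / 3 < enorm2 z → iterD γ ψ z = 0 := by
  have hU : IsOpen {z : V n | 2 / 3 < enorm2 z} := isOpen_lt continuous_const continuous_enorm2
  induction γ with
  | nil =>
    intro z hz
    by_contra h
    exact absurd (hψ_supp z h) (not_le.mpr hz)
  | cons i γ ih =>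
    intro z hz
    have hev : iterD γ ψ =ᶠ[nhds z] (fun _ => (0:ℝ)) := by
      filter_upwards [hU.mem_nhds hz] with y hy using ih y hy
    rw [iterD_cons]
    show (fderiv ℝ (iterD γ ψ) z) (Pi.single i 1) = 0
    rw [hev.fderiv_eq, fderiv_fun_const]
    simp

lemma iterD_psi_bound (hψ_smooth : ContDiff ℝ (⊤ : ℕ∞) ψ)
    (hψ_supp : ∀ w : V n, ψ w ≠ 0 → enorm2 w ≤ 2 / 3)
    (γ : List (Fin n)) : ∃ B > 0, ∀ z : V n, |iterD γ ψ z| ≤ B := by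
  have hcs : HasCompactSupport ψ := by
    apply HasCompactSupport.intro (isCompact_closedBall (0 : V n) 1)
    intro z hz
    by_contra h
    apply hz
    rw [Metric.mem_closedBall, dist_zero_right]
    rw [pi_norm_le_iff_of_nonneg (by norm_num : (0:ℝ) ≤ 1)]
    intro i
    have h1 : |z i| ≤ enorm2 z := by
      rw [show |z i| = Real.sqrt ((z i)^2) from (Real.sqrt_sq_eq_abs _).symm]
      exact Real.sqrt_le_sqrt (Finset.single_le_sum (fun j _ => sq_nonneg (z j))
        (Finset.mem_univ i))
    have h2 := hψ_supp z h
    calc ‖z i‖ = |z i| := rfl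
      _ ≤ 2/3 := h1.trans h2
      _ ≤ 1 := by norm_num
  have hcsγ : HasCompactSupport (iterD γ ψ) := by
    induction γ with
    | nil => exact hcs
    | cons i γ ih => exact ih.fderiv_apply ℝ (Pi.single i 1)
  obtain ⟨C, hC⟩ := hcsγ.exists_bound_of_continuous (iterD_contDiff hψ_smooth γ).continuous
  refine ⟨max C 1, lt_of_lt_of_le one_pos (le_max_right _ _), fun z => ?_⟩
  exact le_trans (hC z) (le_max_left _ _)

/-- Chain rule representation. -/
lemma iterD_scale (hg : ContDiff ℝ (⊤ : ℕ∞) ψ) (c : ℝ) (w : V n) (γ : List (Fin n)) :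
    ∀ z : V n, iterD γ (fun y => ψ (c • (w - y))) z
      = (-c) ^ γ.length * iterD γ ψ (c • (w - z)) := by
  induction γ with
  | nil => intro z; simp
  | cons i γ ih =>
    intro z
    have hfun : iterD γ (fun y => ψ (c • (w - y)))
        = fun y => (-c) ^ γ.length * iterD γ ψ (c • (w - y)) := funext ih
    rw [iterD_cons, hfun]
    set h := iterD γ ψ with hh
    have hhs : ContDiff ℝ (⊤ : ℕ∞) h := iterD_contDiff hg γ
    have hL : HasFDerivAt (fun y : V n => c • (w - y))
        ((-c) • ContinuousLinearMap.id ℝ (V n)) z := by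
      have h1 := HasFDerivAt.const_smul (R := ℝ) ((hasFDerivAt_id (𝕜 := ℝ) z).const_sub w) c
      have h2 : (c • -ContinuousLinearMap.id ℝ (V n)) = (-c) • ContinuousLinearMap.id ℝ (V n) := by
        rw [smul_neg, ← neg_smul]
      exact h2 ▸ h1
    have hd : HasFDerivAt h (fderiv ℝ h (c • (w - z))) (c • (w - z)) :=
      (hhs.differentiable (by simp) _).hasFDerivAt
    have hcomp : HasFDerivAt (fun y : V n => h (c • (w - y)))
        ((fderiv ℝ h (c • (w - z))).comp ((-c) • ContinuousLinearMap.id ℝ (V n))) z :=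
      hd.comp z hL
    have hmul := hcomp.const_mul ((-c) ^ γ.length)
    show (fderiv ℝ (fun y => (-c) ^ γ.length * h (c • (w - y))) z) (Pi.single i 1)
      = (-c) ^ (i :: γ).length * iterD (i :: γ) ψ (c • (w - z))
    rw [iterD_cons, hmul.fderiv]
    simp only [ContinuousLinearMap.coe_smul', Pi.smul_apply,
      ContinuousLinearMap.coe_comp', Function.comp_apply, ContinuousLinearMap.smul_apply,
      ContinuousLinearMap.coe_id', id_eq, _root_.map_smul, smul_eq_mul, List.length_cons]
    rw [← hh]
    ring

end Psi

section Bridge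
variable {E : Type}

lemma mderiv_nil_eq (f : V n → V n → ℝ) (γ : List (Fin n)) (w : V n) :
    ∀ w' : V n, mderiv ([] : List (Fin n)) γ f w w' = iterD γ (f w) w' := by
  induction γ with
  | nil => intro w'; rfl
  | cons i γ ih =>
    intro w'
    show fderiv ℝ (fun η => mderiv ([] : List (Fin n)) γ f w η) w' (Pi.single i 1)
      = iterD (i :: γ) (f w) w'
    have hfun : (fun η => mderiv ([] : List (Fin n)) γ f w η) = iterD γ (f w) := funext ih
    rw [hfun, iterD_cons]

lemma mderiv_nil_mul (F G : V n → ℝ) (hG : ContDiff ℝ (⊤ : ℕ∞) G) (α : List (Fin n)) :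
    ∀ u v : V n, mderiv ([] : List (Fin n)) α (fun u v => F u * G v) u v
      = F u * iterD α G v := by
  induction α with
  | nil => intro u v; rfl
  | cons i α ih =>
    intro u v
    show fderiv ℝ (fun η => mderiv ([] : List (Fin n)) α (fun u v => F u * G v) u η) v
        (Pi.single i 1) = F u * iterD (i :: α) G v
    have hfun : (fun η => mderiv ([] : List (Fin n)) α (fun u v => F u * G v) u η)
        = fun η => F u * iterD α G η := funext (fun η => ih u η)
    rw [hfun, fderiv_const_mul ((iterD_contDiff hG α).differentiable (by simp) v) (F u), iterD_cons]
    simp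

lemma foldr_pdX_mul {F : V n → ℝ} (hF : ContDiff ℝ (⊤ : ℕ∞) F) (H : V n → ℝ) (β : List (Fin n)) :
    ∀ u v : V n,
      List.foldr (fun i g => pdX i g) (fun u v => F u * H v) β u v = iterD β F u * H v := by
  induction β with
  | nil => intro u v; rfl
  | cons i β ih =>
    intro u v
    show fderiv ℝ
        (fun y => List.foldr (fun i g => pdX i g) (fun u v => F u * H v) β y v) u
        (Pi.single i 1) = iterD (i :: β) F u * H v
    have hfun : (fun y => List.foldr (fun i g => pdX i g) (fun u v => F u * H v) β y v)
        = fun y => iterD β F y * H v := funext (fun y => ih y v)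
    rw [hfun, fderiv_mul_const ((iterD_contDiff hF β).differentiable (by simp) u) (H v), iterD_cons]
    simp [mul_comm]

lemma mderiv_mul {F G : V n → ℝ} (hF : ContDiff ℝ (⊤ : ℕ∞) F) (hG : ContDiff ℝ (⊤ : ℕ∞) G)
    (β α : List (Fin n)) (u v : V n) :
    mderiv β α (fun u v => F u * G v) u v = iterD β F u * iterD α G v := by
  show List.foldr (fun i g => pdX i g)
      (mderiv ([] : List (Fin n)) α (fun u v => F u * G v)) β u v = _
  have h1 : mderiv ([] : List (Fin n)) α (fun u v => F u * G v)
      = fun u v => F u * iterD α G v :=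
    funext fun u => funext fun v => mderiv_nil_mul F G hG α u v
  rw [h1]
  exact foldr_pdX_mul hF (iterD α G) β u v

end Bridge

lemma chiA_contDiff {ψ : V n → ℝ} (hψ : ContDiff ℝ (⊤ : ℕ∞) ψ) (a : ℝ) (w : V n) :
    ContDiff ℝ (⊤ : ℕ∞) (chiA ψ a w) :=
  hψ.comp ((contDiff_const.sub contDiff_id).const_smul (a * (jb w)⁻¹))

/-- The core estimate. -/
lemma core_estimate (a : ℝ) (ha : 0 < a) (ψ : V n → ℝ)
    (hψ_smooth : ContDiff ℝ (⊤ : ℕ∞) ψ)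
    (hψ_supp : ∀ w : V n, ψ w ≠ 0 → enorm2 w ≤ 2 / 3)
    (γ₁ γ₂ : List (Fin n)) :
    ∃ C > 0, ∀ w w' : V n, |iterD (γ₁ ++ γ₂) (chiA ψ a w) w'|
      ≤ C * jb w ^ (-(γ₁.length : ℝ)) * jb w' ^ (-(γ₂.length : ℝ)) := by
  obtain ⟨B, hB, hBb⟩ := iterD_psi_bound hψ_smooth hψ_supp (γ₁ ++ γ₂)
  set k₁ := γ₁.length with hk₁
  set k₂ := γ₂.length with hk₂
  set M : ℝ := 1 + 2 / 3 * a⁻¹ with hM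
  have hM0 : 0 < M := by positivity
  refine ⟨a ^ (k₁ + k₂) * B * M ^ k₂, by positivity, fun w w' => ?_⟩
  have hP : 0 < jb w := jb_pos w
  have hQ0 : 0 < jb w' := jb_pos w'
  set c : ℝ := a * (jb w)⁻¹ with hc
  have hc0 : 0 < c := mul_pos ha (inv_pos.mpr hP)
  have hrep : iterD (γ₁ ++ γ₂) (chiA ψ a w) w'
      = (-c) ^ (γ₁ ++ γ₂).length * iterD (γ₁ ++ γ₂) ψ (c • (w - w')) :=
    iterD_scale hψ_smooth c w (γ₁ ++ γ₂) w'
  rw [hrep, abs_mul, abs_pow, abs_neg, abs_of_pos hc0,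
    Real.rpow_neg hP.le, Real.rpow_natCast, Real.rpow_neg hQ0.le, Real.rpow_natCast]
  have hk : (γ₁ ++ γ₂).length = k₁ + k₂ := List.length_append
  set P := jb w
  set Q := jb w'
  by_cases hball : enorm2 (c • (w - w')) ≤ 2 / 3
  · -- inside the support region
    set t := enorm2 (w - w') with ht
    have ht0 : 0 ≤ t := enorm2_nonneg _
    have h1 : enorm2 (c • (w - w')) = c * t := enorm2_smul c hc0.le _
    rw [h1] at hball
    have key : a * t ≤ 2 / 3 * P := by
      have h2 := mul_le_mul_of_nonneg_left hball hP.le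
      calc a * t = P * (c * t) := by rw [hc]; field_simp
        _ ≤ P * (2 / 3) := h2
        _ = 2 / 3 * P := by ring
    have h3 : t ≤ a⁻¹ * (2 / 3 * P) := by
      have h4 := mul_le_mul_of_nonneg_left key (inv_nonneg.mpr ha.le)
      calc t = a⁻¹ * (a * t) := by field_simp
        _ ≤ a⁻¹ * (2 / 3 * P) := h4
    have hQM : Q ≤ M * P := by
      have h5 := jb_le_peetre w w'
      have h6 : P + t ≤ M * P := by rw [hM]; nlinarith [h3]
      exact le_trans h5 h6
    have hval : |iterD (γ₁ ++ γ₂) ψ (c • (w - w'))| ≤ B := hBb _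
    have hkey : (P ^ k₂)⁻¹ ≤ M ^ k₂ * (Q ^ k₂)⁻¹ := by
      have h7 : Q ^ k₂ ≤ (M * P) ^ k₂ := pow_le_pow_left₀ hQ0.le hQM k₂
      have h8 : ((M * P) ^ k₂)⁻¹ ≤ (Q ^ k₂)⁻¹ :=
        inv_anti₀ (pow_pos hQ0 k₂) h7
      have h9 := mul_le_mul_of_nonneg_left h8 (pow_pos hM0 k₂).le
      calc (P ^ k₂)⁻¹ = M ^ k₂ * ((M * P) ^ k₂)⁻¹ := by
            rw [mul_pow]
            field_simp
        _ ≤ M ^ k₂ * (Q ^ k₂)⁻¹ := h9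
    calc c ^ (γ₁ ++ γ₂).length * |iterD (γ₁ ++ γ₂) ψ (c • (w - w'))|
        ≤ c ^ (k₁ + k₂) * B := by
          rw [hk]; exact mul_le_mul_of_nonneg_left hval (pow_nonneg hc0.le _)
      _ = a ^ (k₁ + k₂) * B * ((P ^ k₁)⁻¹ * (P ^ k₂)⁻¹) := by
          rw [hc]; ring
      _ = (a ^ (k₁ + k₂) * B * (P ^ k₁)⁻¹) * (P ^ k₂)⁻¹ := by ring
      _ ≤ (a ^ (k₁ + k₂) * B * (P ^ k₁)⁻¹) * (M ^ k₂ * (Q ^ k₂)⁻¹) :=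
          mul_le_mul_of_nonneg_left hkey (by positivity)
      _ = a ^ (k₁ + k₂) * B * M ^ k₂ * (P ^ k₁)⁻¹ * (Q ^ k₂)⁻¹ := by ring
  · -- outside the support region
    have h0 : iterD (γ₁ ++ γ₂) ψ (c • (w - w')) = 0 :=
      iterD_psi_zero hψ_supp _ _ (not_le.mp hball)
    rw [h0, abs_zero, mul_zero]
    positivity

end Aux

/-- **Lemma 4.5.** (i) `|∂_{w'}^{γ₁+γ₂} χ_a(w,w')| ≲ ⟨w⟩^{-|γ₁|} ⟨w'⟩^{-|γ₂|}`;
(ii) `|∂_{x'}^{α₁+α₂} ∂_{ξ'}^{β₁+β₂} χ(x,x',ξ',ξ)| ≲ ⟨x⟩^{-|α₁|}⟨x'⟩^{-|α₂|}⟨ξ⟩^{-|β₁|}⟨ξ'⟩^{-|β₂|}`,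
where `χ(x,x',ξ',ξ) = χ_a(x,x')·χ_a(ξ,ξ')`. -/
theorem cutoff_estimates (n : ℕ) (hn : 1 ≤ n) (a : ℝ) (ha : 0 < a)
    (ψ : V n → ℝ) (hψ_smooth : ContDiff ℝ (⊤ : ℕ∞) ψ)
    (hψ_le : ∀ w : V n, 0 ≤ ψ w ∧ ψ w ≤ 1)
    (hψ_one : ∀ w : V n, enorm2 w ≤ 1 / 2 → ψ w = 1)
    (hψ_supp : ∀ w : V n, ψ w ≠ 0 → enorm2 w ≤ 2 / 3) :
    (∀ γ₁ γ₂ : List (Fin n), ∃ C > 0, ∀ w w' : V n,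
      |mderiv ([] : List (Fin n)) (γ₁ ++ γ₂) (chiA ψ a) w w'| ≤
        C * jb w ^ (-(γ₁.length : ℝ)) * jb w' ^ (-(γ₂.length : ℝ))) ∧
    (∀ α₁ α₂ β₁ β₂ : List (Fin n), ∃ C > 0, ∀ x x' ξ' ξ : V n,
      |mderiv (α₁ ++ α₂) (β₁ ++ β₂)
          (fun x' ξ' => chiA ψ a x x' * chiA ψ a ξ ξ') x' ξ'| ≤
        C * jb x ^ (-(α₁.length : ℝ)) * jb x' ^ (-(α₂.length : ℝ)) *
          jb ξ ^ (-(β₁.length : ℝ)) * jb ξ' ^ (-(β₂.length : ℝ))) := by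
  constructor
  · intro γ₁ γ₂
    obtain ⟨C, hC, h⟩ := Aux.core_estimate a ha ψ hψ_smooth hψ_supp γ₁ γ₂
    refine ⟨C, hC, fun w w' => ?_⟩
    rw [Aux.mderiv_nil_eq (chiA ψ a) (γ₁ ++ γ₂) w w']
    exact h w w'
  · intro α₁ α₂ β₁ β₂
    obtain ⟨C₁, hC₁, h₁⟩ := Aux.core_estimate a ha ψ hψ_smooth hψ_supp α₁ α₂
    obtain ⟨C₂, hC₂, h₂⟩ := Aux.core_estimate a ha ψ hψ_smooth hψ_supp β₁ β₂
    refine ⟨C₁ * C₂, mul_pos hC₁ hC₂, fun x x' ξ' ξ => ?_⟩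
    rw [Aux.mderiv_mul (Aux.chiA_contDiff hψ_smooth a x) (Aux.chiA_contDiff hψ_smooth a ξ)
      (α₁ ++ α₂) (β₁ ++ β₂) x' ξ', abs_mul]
    have hjx := Aux.jb_pos x
    have hjx' := Aux.jb_pos x'
    have hjξ := Aux.jb_pos ξ
    have hjξ' := Aux.jb_pos ξ'
    calc |Aux.iterD (α₁ ++ α₂) (chiA ψ a x) x'| * |Aux.iterD (β₁ ++ β₂) (chiA ψ a ξ) ξ'|
        ≤ (C₁ * jb x ^ (-(α₁.length : ℝ)) * jb x' ^ (-(α₂.length : ℝ)))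
          * (C₂ * jb ξ ^ (-(β₁.length : ℝ)) * jb ξ' ^ (-(β₂.length : ℝ))) :=
          mul_le_mul (h₁ x x') (h₂ ξ ξ') (abs_nonneg _) (by positivity)
      _ = C₁ * C₂ * jb x ^ (-(α₁.length : ℝ)) * jb x' ^ (-(α₂.length : ℝ))
          * jb ξ ^ (-(β₁.length : ℝ)) * jb ξ' ^ (-(β₂.length : ℝ)) := by ring
end
end
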